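/- arXiv:2109.14793 — 6 statements merged into one kernel-verified Lean document; each statement's English description precedes it below -/
import Mathlib

section
/- For every integer m ≥ 20, there do not exist integers ℓ₁, ℓ₂, ℓ₃, ℓ₄ such that p_m(ℓ₁) + 2·p_m(ℓ₂) + 4·p_m(ℓ₃) + 8·p_m(ℓ₄) = 16. -/
/-!
The values of `p_m` at `ℓ = 0, 1` are `0, 1`, and every other value is at least `m - 3`, because
`2 (p_m(ℓ) - (m - 3)) = (ℓ + 1) ((m - 2) ℓ - 2 (m - 3))` and the second root `2 - 2/(m - 2)` lies
in `[1, 2)`. For `m ≥ 20` a representation of `16` can therefore only use the values `0` and `1`,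
and then the left-hand side is at most `1 + 2 + 4 + 8 = 15`.
-/

/-- The generalized `m`-gonal number `p_m(ℓ) = ((m-2)ℓ² - (m-4)ℓ)/2`. -/
def polygonal (m ℓ : ℤ) : ℤ := ((m - 2) * ℓ ^ 2 - (m - 4) * ℓ) / 2

lemma two_mul_polygonal (m ℓ : ℤ) : 2 * polygonal m ℓ = (m - 2) * ℓ ^ 2 - (m - 4) * ℓ := by
  have hdvd : (2 : ℤ) ∣ (m - 2) * ℓ ^ 2 - (m - 4) * ℓ := by
    have h : (m - 2) * ℓ ^ 2 - (m - 4) * ℓ = (m - 2) * ((ℓ - 1) * (ℓ - 1 + 1)) + 2 * ℓ := by ring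
    rw [h]
    exact dvd_add ((Int.even_mul_succ_self (ℓ - 1)).two_dvd.mul_left _) (dvd_mul_right 2 ℓ)
  exact Int.mul_ediv_cancel' hdvd

@[simp] lemma polygonal_zero (m : ℤ) : polygonal m 0 = 0 := by
  simp [polygonal]

@[simp] lemma polygonal_one (m : ℤ) : polygonal m 1 = 1 := by
  have := two_mul_polygonal m 1
  omega

lemma sub_three_le_polygonal {m ℓ : ℤ} (hm : 3 ≤ m) (h0 : ℓ ≠ 0) (h1 : ℓ ≠ 1) :
    m - 3 ≤ polygonal m ℓ := by
  have hfactor : 2 * (polygonal m ℓ - (m - 3)) = (ℓ + 1) * ((m - 2) * ℓ - 2 * (m - 3)) := by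
    rw [mul_sub, two_mul_polygonal]
    ring
  have hprod : 0 ≤ (ℓ + 1) * ((m - 2) * ℓ - 2 * (m - 3)) := by
    rcases lt_or_gt_of_ne h0 with hneg | hpos
    · exact mul_nonneg_of_nonpos_of_nonpos (by omega) (by nlinarith)
    · have h2 : 2 ≤ ℓ := by omega
      exact mul_nonneg (by omega) (by nlinarith [mul_le_mul_of_nonneg_left h2 (by omega : (0 : ℤ) ≤ m - 2)])
  omega

lemma polygonal_eq_zero_or_eq_one_or_sub_three_le (m ℓ : ℤ) (hm : 3 ≤ m) :
    polygonal m ℓ = 0 ∨ polygonal m ℓ = 1 ∨ m - 3 ≤ polygonal m ℓ := by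
  rcases eq_or_ne ℓ 0 with rfl | h0
  · simp
  rcases eq_or_ne ℓ 1 with rfl | h1
  · simp
  exact Or.inr (Or.inr (sub_three_le_polygonal hm h0 h1))

theorem no_rep_sixteen (m : ℤ) (hm : 20 ≤ m) :
    ¬ ∃ ℓ₁ ℓ₂ ℓ₃ ℓ₄ : ℤ,
      polygonal m ℓ₁ + 2 * polygonal m ℓ₂ + 4 * polygonal m ℓ₃ + 8 * polygonal m ℓ₄ = 16 := by
  rintro ⟨ℓ₁, ℓ₂, ℓ₃, ℓ₄, h⟩
  have h₁ := polygonal_eq_zero_or_eq_one_or_sub_three_le m ℓ₁ (by omega)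
  have h₂ := polygonal_eq_zero_or_eq_one_or_sub_three_le m ℓ₂ (by omega)
  have h₃ := polygonal_eq_zero_or_eq_one_or_sub_three_le m ℓ₃ (by omega)
  have h₄ := polygonal_eq_zero_or_eq_one_or_sub_three_le m ℓ₄ (by omega)
  omega
end

section
/- Let a, b ∈ ℤ and c ∈ ℕ with c ≥ 1. If gcd(a,c) does not divide b, then the generalized quadratic Gauss sum G(a,b;c) = Σ_{ℓ mod c} e^{2πi(aℓ² + bℓ)/c} is zero; and if gcd(a,c) divides b, then G(a,b;c) = gcd(a,c) · G(a/gcd(a,c), b/gcd(a,c); c/gcd(a,c)). -/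
/-!
Let `d` be any common divisor of `a` and `c`, and write `c = d c'`. Splitting `ℓ = t c' + j` with
`t < d`, `j < c'`, the divisibility `d ∣ a` makes `a ℓ² / c` differ from `a j² / c` by an integer,
so the summand at `ℓ` is the summand at `j` times `e^{2πi b t / d}`. Hence `G(a,b;c)` factors as a
partial sum over `j < c'` times `∑_{t<d} e^{2πi b t / d}`, which is `d` or `0` according as `d ∣ b`;
when `d ∣ b` the partial sum is exactly `G(a/d, b/d; c/d)`. The theorem is the case `d = gcd(a,c)`.
-/

open Complex

/-- The generalized quadratic Gauss sum `G(a,b;c) = Σ_{ℓ mod c} e^{2πi(aℓ²+bℓ)/c}`. -/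
noncomputable def gaussSum' (a b : ℤ) (c : ℕ) : ℂ :=
  ∑ ℓ ∈ Finset.range c, Complex.exp (2 * Real.pi * Complex.I * (a * ℓ ^ 2 + b * ℓ) / c)

open Finset
open scoped Real

theorem Finset.sum_range_mul_eq_sum_sum {M : Type*} [AddCommMonoid M] (f : ℕ → M) (m n : ℕ) :
    ∑ ℓ ∈ range (m * n), f ℓ = ∑ t ∈ range m, ∑ j ∈ range n, f (t * n + j) := by
  induction m with
  | zero => simp
  | succ m ih => rw [Nat.succ_mul, sum_range_add, ih, sum_range_succ]

theorem sum_range_exp_mul_div_eq_ite (b : ℤ) {d : ℕ} (hd : d ≠ 0) :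
    ∑ t ∈ range d, exp (2 * π * I * (b * t) / d) = if (d : ℤ) ∣ b then (d : ℂ) else 0 := by
  have hζ := isPrimitiveRoot_exp d hd
  have hterm (t : ℕ) : exp (2 * π * I * (b * t) / d) = (exp (2 * π * I / d) ^ b) ^ t := by
    rw [← exp_int_mul, ← exp_nat_mul]
    congr 1
    ring
  simp only [hterm]
  split_ifs with hb
  · simp [(hζ.zpow_eq_one_iff_dvd b).mpr hb]
  · have hpow : (exp (2 * π * I / d) ^ b) ^ d = 1 := by
      rw [← zpow_natCast, ← zpow_mul, mul_comm b, zpow_mul, zpow_natCast, hζ.pow_eq_one, one_zpow]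
    rw [geom_sum_eq (mt (hζ.zpow_eq_one_iff_dvd b).mp hb), hpow, sub_self, zero_div]

noncomputable def gaussTerm (a b : ℤ) (c ℓ : ℕ) : ℂ :=
  exp (2 * π * I * (a * ℓ ^ 2 + b * ℓ) / c)

theorem gaussSum'_eq_sum_gaussTerm (a b : ℤ) (c : ℕ) :
    gaussSum' a b c = ∑ ℓ ∈ range c, gaussTerm a b c ℓ := rfl

theorem gaussTerm_mul_add {a : ℤ} (b : ℤ) {d c : ℕ} (hda : (d : ℤ) ∣ a) (hd : d ≠ 0) (hc : c ≠ 0)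
    (t j : ℕ) :
    gaussTerm a b (d * c) (t * c + j) = gaussTerm a b (d * c) j * exp (2 * π * I * (b * t) / d) := by
  obtain ⟨a', rfl⟩ := hda
  rw [gaussTerm, gaussTerm, ← exp_add, exp_eq_exp_iff_exists_int]
  refine ⟨a' * (t ^ 2 * c + 2 * t * j), ?_⟩
  push_cast
  field_simp
  ring

theorem gaussTerm_mul_mul_mul (a b : ℤ) {d : ℕ} (c ℓ : ℕ) (hd : d ≠ 0) :
    gaussTerm (d * a) (d * b) (d * c) ℓ = gaussTerm a b c ℓ := by
  rw [gaussTerm, gaussTerm]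
  push_cast
  rw [show 2 * π * I * (d * a * ℓ ^ 2 + d * b * ℓ) = (d : ℂ) * (2 * π * I * (a * ℓ ^ 2 + b * ℓ)) by
    ring, mul_div_mul_left _ _ (Nat.cast_ne_zero.mpr hd)]

theorem gaussSum'_mul_eq_mul_sum (a b : ℤ) {d c : ℕ} (hda : (d : ℤ) ∣ a) :
    gaussSum' a b (d * c) =
      (∑ j ∈ range c, gaussTerm a b (d * c) j) * ∑ t ∈ range d, exp (2 * π * I * (b * t) / d) := by
  rw [gaussSum'_eq_sum_gaussTerm, sum_range_mul_eq_sum_sum, sum_mul, sum_comm]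
  refine sum_congr rfl fun j hj => ?_
  rw [mul_sum]
  refine sum_congr rfl fun t ht => gaussTerm_mul_add b hda ?_ ?_ t j
  · exact Nat.ne_zero_of_lt (mem_range.mp ht)
  · exact Nat.ne_zero_of_lt (mem_range.mp hj)

theorem gaussSum'_eq_ite_of_dvd (a b : ℤ) {d c : ℕ} (hda : (d : ℤ) ∣ a) (hdc : d ∣ c) :
    gaussSum' a b c = if (d : ℤ) ∣ b then (d : ℂ) * gaussSum' (a / d) (b / d) (c / d) else 0 := by
  rcases eq_or_ne d 0 with rfl | hd
  · simp [gaussSum', zero_dvd_iff.mp hdc]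
  obtain ⟨c, rfl⟩ := hdc
  rw [gaussSum'_mul_eq_mul_sum a b hda, sum_range_exp_mul_div_eq_ite b hd,
    Nat.mul_div_cancel_left _ (Nat.pos_of_ne_zero hd)]
  split_ifs with hdb
  · obtain ⟨a, rfl⟩ := hda
    obtain ⟨b, rfl⟩ := hdb
    have hd' : (d : ℤ) ≠ 0 := Nat.cast_ne_zero.mpr hd
    rw [Int.mul_ediv_cancel_left _ hd', Int.mul_ediv_cancel_left _ hd', mul_comm,
      gaussSum'_eq_sum_gaussTerm]
    simp only [gaussTerm_mul_mul_mul _ _ _ _ hd]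
  · rw [mul_zero]

theorem gaussSum_gcd_general (a b : ℤ) (c : ℕ) :
    (¬ (Int.gcd a c : ℤ) ∣ b → gaussSum' a b c = 0) ∧
    ((Int.gcd a c : ℤ) ∣ b →
      gaussSum' a b c
        = (Int.gcd a c : ℂ) *
            gaussSum' (a / (Int.gcd a c : ℤ)) (b / (Int.gcd a c : ℤ)) (c / Int.gcd a c)) := by
  have h := gaussSum'_eq_ite_of_dvd a b (Int.gcd_dvd_left a c)
    (Int.natCast_dvd_natCast.mp (Int.gcd_dvd_right a c))
  exact ⟨fun hb => by rw [h, if_neg hb], fun hb => by rw [h, if_pos hb]⟩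

theorem gaussSum_gcd (a b : ℤ) (c : ℕ) (hc : 1 ≤ c) :
    (¬ (Int.gcd a c : ℤ) ∣ b → gaussSum' a b c = 0) ∧
    ((Int.gcd a c : ℤ) ∣ b →
      gaussSum' a b c
        = (Int.gcd a c : ℂ) *
            gaussSum' (a / (Int.gcd a c : ℤ)) (b / (Int.gcd a c : ℤ)) (c / Int.gcd a c)) :=
  gaussSum_gcd_general a b c
end

section
/- Let a be an odd integer, b an even integer, and r an integer with r ≥ 2. Then G(a,b;2^r) = 2^{r/2}(1+i)·(−2^r/a)·ε_a·exp(−2πi·[a]_{2^r}·(b²/4)/2^r), where (−2^r/a) is the Jacobi symbol, ε_a = 1 if a ≡ 1 (mod 4) and ε_a = i if a ≡ 3 (mod 4), and [a]_{2^r} is an inverse of a modulo 2^r. -/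
/-!
Since `a` is invertible modulo `2^r` and `b = 2b'` is even, completing the square
`a ℓ² + b ℓ = a (ℓ + [a] b')² - [a] b'²` splits off the factor `e(-[a] b'² / 2^r)` and leaves the
pure sum `G(a,0;2^r)`. For `r ≥ 4` the shift `ℓ ↦ ℓ + 2^(r-2)` multiplies the terms with odd `ℓ`
by `-1`, so they cancel, while the terms with even `ℓ` run twice through `G(a,0;2^(r-2))`; hence
`G(a,0;2^r) = 2 G(a,0;2^(r-2))`, and the cases `r = 2, 3` are computed directly. On the other side,
`(-2^r/a)` only depends on the parity of `r`: it is `χ₄(a)` for even and `χ₈'(a)` for odd `r`.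
-/

open Complex

open Finset Function ZMod
open scoped Real

theorem Finset.sum_range_two_mul_eq_even_add_odd {M : Type*} [AddCommMonoid M] (f : ℕ → M) (n : ℕ) :
    ∑ i ∈ range (2 * n), f i = ∑ i ∈ range n, f (2 * i) + ∑ i ∈ range n, f (2 * i + 1) := by
  induction n with
  | zero => simp
  | succ n ih =>
    rw [mul_add_one, sum_range_succ, sum_range_succ, ih, sum_range_succ, sum_range_succ]
    abel

theorem Function.Periodic.sum_range_mul {M : Type*} [AddCommMonoid M] {f : ℕ → M} {n : ℕ}
    (hf : Periodic f n) (k : ℕ) : ∑ i ∈ range (k * n), f i = k • ∑ i ∈ range n, f i := by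
  induction k with
  | zero => simp
  | succ k ih =>
    rw [add_one_mul, sum_range_add, ih, succ_nsmul]
    congr 1
    refine sum_congr rfl fun i _ => ?_
    rw [add_comm]
    simpa using hf.nat_mul k i

theorem Function.Antiperiodic.sum_range_two_mul {M : Type*} [AddCommGroup M] {f : ℕ → M} {n : ℕ}
    (hf : Antiperiodic f n) : ∑ i ∈ range (2 * n), f i = 0 := by
  simp [two_mul, sum_range_add, add_comm n, hf _]

theorem ZMod.sum_range_natCast {M : Type*} [AddCommMonoid M] {N : ℕ} [NeZero N]
    (f : ZMod N → M) : ∑ ℓ ∈ range N, f ℓ = ∑ z : ZMod N, f z :=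
  sum_nbij' (↑) val (fun _ _ => mem_univ _) (fun z _ => mem_range.2 z.val_lt)
    (fun _ hℓ => val_natCast_of_lt (mem_range.1 hℓ)) (fun z _ => natCast_zmod_val z) fun _ _ => rfl

namespace ZMod

theorem stdAddChar_intCast_congr {N : ℕ} [NeZero N] {m m' : ℤ} (h : m ≡ m' [ZMOD N]) :
    stdAddChar (m : ZMod N) = stdAddChar (m' : ZMod N) := by
  rw [(intCast_eq_intCast_iff m m' N).2 h]

theorem stdAddChar_intCast_eq_of_mul_eq {N N' : ℕ} [NeZero N] [NeZero N'] {m m' : ℤ}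
    (h : m * N' = m' * N) : stdAddChar (m : ZMod N) = stdAddChar (m' : ZMod N') := by
  have hN : (N : ℂ) ≠ 0 := Nat.cast_ne_zero.2 (NeZero.ne N)
  have hN' : (N' : ℂ) ≠ 0 := Nat.cast_ne_zero.2 (NeZero.ne N')
  have h' : (m : ℂ) * N' = m' * N := by exact_mod_cast h
  rw [stdAddChar_coe, stdAddChar_coe]
  congr 1
  rw [div_eq_div_iff hN hN']
  linear_combination 2 * π * I * h'

theorem stdAddChar_intCast_eq_neg_one {N : ℕ} [NeZero N] {m k : ℤ} (hk : Odd k)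
    (h : 2 * m = k * N) : stdAddChar (m : ZMod N) = -1 := by
  rw [stdAddChar_intCast_eq_of_mul_eq (N' := 2) (m' := k) (by push_cast; linarith),
    stdAddChar_coe]
  obtain ⟨j, rfl⟩ := hk
  push_cast
  rw [show 2 * π * I * (2 * j + 1) / 2 = j * (2 * π * I) + π * I by ring, Complex.exp_add,
    exp_int_mul_two_pi_mul_I, exp_pi_mul_I, one_mul]

theorem stdAddChar_four_one : stdAddChar (1 : ZMod 4) = I := by
  have h := stdAddChar_coe (N := 4) 1
  push_cast at h
  rw [h, show 2 * π * I * 1 / 4 = π / 2 * I by ring, exp_pi_div_two_mul_I]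

theorem stdAddChar_four_two : stdAddChar (2 : ZMod 4) = -1 := by
  simpa using stdAddChar_intCast_eq_neg_one (N := 4) (m := 2) odd_one (by norm_num)

theorem stdAddChar_eight_one : stdAddChar (1 : ZMod 8) = √2 / 2 * (1 + I) := by
  have h := stdAddChar_coe (N := 8) 1
  push_cast at h
  rw [h, show 2 * π * I * 1 / 8 = ((π / 4 : ℝ) : ℂ) * I by push_cast; ring, exp_mul_I,
    ← ofReal_cos, ← ofReal_sin, Real.cos_pi_div_four, Real.sin_pi_div_four]
  push_cast
  ring

theorem stdAddChar_eight_two : stdAddChar (2 : ZMod 8) = I := by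
  simpa [stdAddChar_four_one] using
    stdAddChar_intCast_eq_of_mul_eq (N := 8) (N' := 4) (m := 2) (m' := 1) (by norm_num)

theorem stdAddChar_eight_four : stdAddChar (4 : ZMod 8) = -1 := by
  simpa using stdAddChar_intCast_eq_neg_one (N := 8) (m := 4) odd_one (by norm_num)

end ZMod

theorem two_cpow_three_halves_mul_one_add_I :
    (2 : ℂ) ^ ((3 : ℂ) / 2) * (1 + I) = 4 * stdAddChar (1 : ZMod 8) := by
  have h_sqrt : (2 : ℂ) ^ ((1 : ℂ) / 2) = √2 := by
    rw [Real.sqrt_eq_rpow, ofReal_cpow zero_le_two]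
    push_cast
    rfl
  rw [show (3 : ℂ) / 2 = 1 + 1 / 2 by norm_num, cpow_add _ _ two_ne_zero, cpow_one, h_sqrt,
    stdAddChar_eight_one]
  ring

theorem MulChar.sign_mul_apply_natAbs {n : ℕ} {χ : MulChar (ZMod n) ℤ} (hχ : χ (-1) = -1)
    (a : ℤ) : (if 0 ≤ a then 1 else -1) * χ (a.natAbs : ZMod n) = χ a := by
  rw [← Int.cast_natCast, Int.natCast_natAbs]
  rcases le_or_gt 0 a with h | h
  · rw [if_pos h, one_mul, abs_of_nonneg h]
  · rw [if_neg h.not_ge, abs_of_neg h, Int.cast_neg, neg_eq_neg_one_mul (a : ZMod n), map_mul, hχ]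
    ring

theorem sign_mul_jacobiSym_neg_two_pow {a : ℤ} (ha : Odd a) (r : ℕ) :
    (if 0 ≤ a then 1 else -1) * jacobiSym (-(2 ^ r)) a.natAbs
      = if Even r then χ₄ a else χ₈' a := by
  have h_odd : Odd a.natAbs := Int.natAbs_odd.2 ha
  have h_sq (k : ℕ) : jacobiSym ((2 ^ k) ^ 2) a.natAbs = 1 := by
    refine jacobiSym.sq_one' ?_
    have := Nat.Coprime.pow_left k (Nat.coprime_two_left.2 h_odd)
    exact_mod_cast this
  obtain ⟨k, rfl | rfl⟩ := Nat.even_or_odd' r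
  · rw [if_pos (even_two_mul k), show -(2 : ℤ) ^ (2 * k) = -1 * (2 ^ k) ^ 2 by ring,
      jacobiSym.mul_left, h_sq, mul_one, jacobiSym.at_neg_one h_odd,
      MulChar.sign_mul_apply_natAbs (by decide)]
  · rw [if_neg (by simp [parity_simps] : ¬Even (2 * k + 1)),
      show -(2 : ℤ) ^ (2 * k + 1) = -2 * (2 ^ k) ^ 2 by ring,
      jacobiSym.mul_left, h_sq, mul_one, jacobiSym.at_neg_two h_odd,
      MulChar.sign_mul_apply_natAbs (by decide)]

theorem gaussSum'_eq_sum_range {N : ℕ} [NeZero N] (a b : ℤ) :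
    gaussSum' a b N = ∑ ℓ ∈ range N, stdAddChar ((a * ℓ ^ 2 + b * ℓ : ℤ) : ZMod N) := by
  refine sum_congr rfl fun ℓ _ => ?_
  rw [stdAddChar_coe]
  push_cast
  rfl

theorem gaussSum'_eq_sum_zmod {N : ℕ} [NeZero N] (a b : ℤ) :
    gaussSum' a b N = ∑ z : ZMod N, stdAddChar ((a : ZMod N) * z ^ 2 + (b : ZMod N) * z) := by
  rw [gaussSum'_eq_sum_range, ← sum_range_natCast]
  push_cast
  rfl

theorem gaussSum'_two_mul_of_modEq {N : ℕ} [NeZero N] {a x : ℤ} (hx : a * x ≡ 1 [ZMOD N])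
    (b : ℤ) : gaussSum' a (2 * b) N = exp (-(2 * π * I * x * b ^ 2 / N)) * gaussSum' a 0 N := by
  have hx' : (a : ZMod N) * x = 1 := by exact_mod_cast (intCast_eq_intCast_iff _ _ N).2 hx
  have h_exp : exp (-(2 * π * I * x * b ^ 2 / N)) = stdAddChar ((-(x * b ^ 2) : ℤ) : ZMod N) := by
    rw [stdAddChar_coe]
    push_cast
    ring_nf
  rw [gaussSum'_eq_sum_zmod, gaussSum'_eq_sum_zmod, h_exp, mul_sum,
    ← Equiv.sum_comp (Equiv.addRight (-((x : ZMod N) * b)))]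
  refine sum_congr rfl fun z _ => ?_
  rw [Equiv.coe_addRight, ← AddChar.map_add_eq_mul]
  congr 1
  push_cast
  linear_combination (x * b ^ 2 - 2 * b * z : ZMod N) * hx'

theorem gaussSum'_zero_four_mul {a : ℤ} (ha : Odd a) {M : ℕ} (hM : 4 ∣ M) :
    gaussSum' a 0 (4 * M) = 2 * gaussSum' a 0 M := by
  obtain ⟨c, rfl⟩ := hM
  rcases eq_or_ne c 0 with rfl | hc
  · simp [gaussSum']
  have : NeZero c := ⟨hc⟩
  let ψ (ℓ : ℕ) : ℂ := stdAddChar ((a * ℓ ^ 2 : ℤ) : ZMod (4 * (4 * c)))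
  have h_even (i : ℕ) : ψ (2 * i) = stdAddChar ((a * i ^ 2 : ℤ) : ZMod (4 * c)) :=
    stdAddChar_intCast_eq_of_mul_eq (by push_cast; ring)
  have h_periodic : Periodic (fun i : ℕ => stdAddChar ((a * i ^ 2 : ℤ) : ZMod (4 * c))) (4 * c) :=
    fun i => stdAddChar_intCast_congr <|
      Int.modEq_iff_dvd.2 ⟨-(a * (2 * i + 4 * c)), by push_cast; ring⟩
  have h_antiperiodic : Antiperiodic (fun i => ψ (2 * i + 1)) (2 * c) := fun i => by
    have h_odd : Odd (a * (2 * i + 1 + 2 * c)) := ha.mul (by simp [parity_simps])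
    have h_sign : stdAddChar ((8 * c * (a * (2 * i + 1 + 2 * c)) : ℤ) : ZMod (4 * (4 * c))) = -1 :=
      stdAddChar_intCast_eq_neg_one h_odd (by push_cast; ring)
    simp only [ψ]
    rw [← mul_neg_one, ← h_sign, ← AddChar.map_add_eq_mul]
    congr 1
    push_cast
    ring
  have h_odd_sum : ∑ i ∈ range (2 * (4 * c)), ψ (2 * i + 1) = 0 := by
    rw [show 2 * (4 * c) = 2 * (2 * (2 * c)) by ring, h_antiperiodic.periodic_two_mul.sum_range_mul,
      h_antiperiodic.sum_range_two_mul, smul_zero]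
  simp only [gaussSum'_eq_sum_range, zero_mul, add_zero]
  rw [show range (4 * (4 * c)) = range (2 * (2 * (4 * c))) by ring_nf,
    sum_range_two_mul_eq_even_add_odd ψ, h_odd_sum]
  simp only [h_even]
  rw [h_periodic.sum_range_mul, add_zero, two_nsmul, two_mul]

theorem gaussSum'_zero_four {a : ℤ} (ha : Odd a) :
    gaussSum' a 0 4 = 2 * (1 + I) * (χ₄ a : ℂ) * (if a % 4 = 1 then 1 else I) := by
  have h_sum : gaussSum' a 0 4 = 2 + 2 * stdAddChar (a : ZMod 4) := by
    rw [gaussSum'_eq_sum_range]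
    simp only [sum_range_succ, sum_range_zero]
    push_cast
    reduce_mod_char
    simp only [AddChar.map_zero_eq_one]
    ring
  have h3 : stdAddChar (3 : ZMod 4) = -I := by
    rw [show (3 : ZMod 4) = 2 + 1 by decide, AddChar.map_add_eq_mul, stdAddChar_four_one,
      stdAddChar_four_two, neg_one_mul]
  have ha' := Int.odd_iff.1 ha
  rw [h_sum, stdAddChar_intCast_congr (Int.mod_modEq a 4).symm]
  rcases (by omega : a % 4 = 1 ∨ a % 4 = 3) with h | h
  · rw [χ₄_int_one_mod_four h, if_pos h, h, Int.cast_one, stdAddChar_four_one]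
    push_cast
    ring
  · rw [χ₄_int_three_mod_four h, if_neg (by omega), h, Int.cast_ofNat, h3]
    push_cast
    linear_combination 2 * I_sq

theorem gaussSum'_zero_eight {a : ℤ} (ha : Odd a) : gaussSum' a 0 8
    = 4 * stdAddChar (1 : ZMod 8) * (χ₈' a : ℂ) * (if a % 4 = 1 then 1 else I) := by
  have h4 : stdAddChar ((a : ZMod 8) * 4) = -1 := by
    simpa using stdAddChar_intCast_eq_neg_one (N := 8) (m := a * 4) ha (by ring)
  have h_sum : gaussSum' a 0 8 = 4 * stdAddChar (a : ZMod 8) := by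
    rw [gaussSum'_eq_sum_range]
    simp only [sum_range_succ, sum_range_zero]
    push_cast
    reduce_mod_char
    simp only [AddChar.map_zero_eq_one, h4]
    ring
  have h3 : (3 : ZMod 8) = 2 + 1 := by decide
  have h5 : (5 : ZMod 8) = 4 + 1 := by decide
  have h7 : (7 : ZMod 8) = 4 + 2 + 1 := by decide
  have ha' := Int.odd_iff.1 ha
  have h48 : a % 4 = a % 8 % 4 := by omega
  rw [h_sum, stdAddChar_intCast_congr (Int.mod_modEq a 8).symm, χ₈'_int_eq_if_mod_eight, h48]
  rcases (by omega : a % 8 = 1 ∨ a % 8 = 3 ∨ a % 8 = 5 ∨ a % 8 = 7) with h | h | h | h <;>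
    simp [h, ha', h3, h5, h7, AddChar.map_add_eq_mul, stdAddChar_eight_two,
      stdAddChar_eight_four, mul_comm, mul_left_comm]

theorem gaussSum'_zero_two_pow {a : ℤ} (ha : Odd a) {r : ℕ} (hr : 2 ≤ r) :
    gaussSum' a 0 (2 ^ r) = 2 ^ ((r : ℂ) / 2) * (1 + I)
      * ((if Even r then χ₄ a else χ₈' a : ℤ) : ℂ) * (if a % 4 = 1 then 1 else I) := by
  induction r using Nat.strong_induction_on with
  | _ r ih =>
    match r, hr with
    | 2, _ => norm_num [gaussSum'_zero_four ha]
    | 3, _ =>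
      norm_num [gaussSum'_zero_eight ha, two_cpow_three_halves_mul_one_add_I]
    | r + 4, _ =>
      have h_cpow : (2 : ℂ) ^ (((r + 4 : ℕ) : ℂ) / 2) = 2 * 2 ^ (((r + 2 : ℕ) : ℂ) / 2) := by
        rw [show ((r + 4 : ℕ) : ℂ) / 2 = ((r + 2 : ℕ) : ℂ) / 2 + 1 by push_cast; ring,
          cpow_add _ _ two_ne_zero, cpow_one, mul_comm]
      rw [show 2 ^ (r + 4) = 4 * 2 ^ (r + 2) by ring, gaussSum'_zero_four_mul ha ⟨2 ^ r, by ring⟩,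
        ih (r + 2) (by omega) (by omega), h_cpow]
      have h_parity : Even (r + 4) ↔ Even (r + 2) := by simp [Nat.even_add, parity_simps]
      simp only [h_parity]
      ring

theorem gaussSum_two_power (a b : ℤ) (r : ℕ) (hr : 2 ≤ r) (ha : Odd a) (hb : Even b)
    (x : ℤ) (hx : a * x ≡ 1 [ZMOD (2 ^ r : ℕ)]) :
    gaussSum' a b (2 ^ r)
      = ((2 : ℂ) ^ ((r : ℂ) / 2)) * (1 + Complex.I) * ((if 0 ≤ a then (1 : ℤ) else -1) * jacobiSym (-(2 ^ r)) a.natAbs : ℤ) *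
          (if a % 4 = 1 then 1 else Complex.I) *
          Complex.exp (-(2 * Real.pi * Complex.I * x * (b ^ 2 / 4) / (2 ^ r : ℕ))) := by
  obtain ⟨c, rfl⟩ := hb
  rw [← two_mul, gaussSum'_two_mul_of_modEq hx, gaussSum'_zero_two_pow ha hr,
    sign_mul_jacobiSym_neg_two_pow ha]
  push_cast
  ring_nf
end

section
/- Let f: ℍ → ℂ be a function on the upper half-plane of the form f(τ) = Σ_{n≥0} c(n) e^{2πinτ} (absolutely convergent), and let M₁, M₂ be positive integers, m an integer, d := gcd(M₁,M₂), μⱼ := Mⱼ/d. If d divides m, then applying the V-operator V_{M₁} (which sends f(τ) to f(M₁τ)) followed by sieving S_{M₂,m} (which restricts the Fourier expansion to indices congruent to m mod M₂) equals first sieving by S_{μ₂, μ̄₁·(m/d)} and then applying V_{M₁}, where μ̄₁ is an inverse of μ₁ modulo μ₂; if d does not divide m, then f|V_{M₁}|S_{M₂,m} = 0. -/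
/-- The sieving operator on coefficient sequences: keep coefficients whose index is
congruent to `m` modulo `M`. -/
def sieve (M : ℕ) (m : ℤ) (c : ℕ → ℂ) : ℕ → ℂ :=
  fun n => if (n : ℤ) ≡ m [ZMOD M] then c n else 0

/-- The `V`-operator on coefficient sequences: `(c|V_δ)(n) = c(n/δ)` if `δ ∣ n`, else `0`. -/
def Vop (δ : ℕ) (c : ℕ → ℂ) : ℕ → ℂ :=
  fun n => if δ ∣ n then c (n / δ) else 0

/-!
Both sides vanish off the multiples `n = M₁ k`. There, writing `M₁ = d μ₁` and `M₂ = d μ₂`, the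
condition `M₁ k ≡ m (mod M₂)` forces `d ∣ m`, and after cancelling `d` it reads
`μ₁ k ≡ m / d (mod μ₂)`, i.e. `k ≡ μ̄₁ (m / d) (mod μ₂)`.
-/

theorem Int.mul_modEq_iff_modEq_mul_of_mul_modEq_one {a u k b n : ℤ} (hu : a * u ≡ 1 [ZMOD n]) :
    a * k ≡ b [ZMOD n] ↔ k ≡ u * b [ZMOD n] := by
  constructor <;> intro h
  · calc k = 1 * k := (one_mul k).symm
      _ ≡ a * u * k [ZMOD n] := (hu.mul_right k).symm
      _ = u * (a * k) := by ring
      _ ≡ u * b [ZMOD n] := h.mul_left u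
  · calc a * k ≡ a * (u * b) [ZMOD n] := h.mul_left a
      _ = a * u * b := by ring
      _ ≡ 1 * b [ZMOD n] := hu.mul_right b
      _ = b := one_mul b

theorem Int.mul_mul_modEq_iff_dvd_and_modEq {d a u k m n : ℤ} (hd : d ≠ 0)
    (hu : a * u ≡ 1 [ZMOD n]) :
    d * a * k ≡ m [ZMOD d * n] ↔ d ∣ m ∧ k ≡ u * (m / d) [ZMOD n] := by
  by_cases hdm : d ∣ m
  · obtain ⟨m, rfl⟩ := hdm
    rw [mul_assoc, Int.ModEq.mul_left_cancel_iff' hd, Int.mul_ediv_cancel_left _ hd,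
      Int.mul_modEq_iff_modEq_mul_of_mul_modEq_one hu]
    simp
  · refine iff_of_false (fun h ↦ hdm ?_) (fun h ↦ hdm h.1)
    rw [← (h.of_dvd (dvd_mul_right d n)).dvd_iff, mul_assoc]
    exact dvd_mul_right d _

theorem Vop_mul_apply {δ : ℕ} (hδ : 0 < δ) (c : ℕ → ℂ) (k : ℕ) : Vop δ c (δ * k) = c k := by
  simp [Vop, Nat.mul_div_cancel_left k hδ]

theorem Vop_apply_of_not_dvd {δ n : ℕ} (h : ¬δ ∣ n) (c : ℕ → ℂ) : Vop δ c n = 0 :=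
  if_neg h

theorem V_sieve_commute_general (M₁ M₂ : ℕ) (hM₁ : 0 < M₁) (m : ℤ)
    (u : ℤ) (hu : ((M₁ / Nat.gcd M₁ M₂ : ℕ) : ℤ) * u ≡ 1 [ZMOD (M₂ / Nat.gcd M₁ M₂ : ℕ)])
    (c : ℕ → ℂ) :
    sieve M₂ m (Vop M₁ c)
      = if ((Nat.gcd M₁ M₂ : ℤ)) ∣ m then
          Vop M₁ (sieve (M₂ / Nat.gcd M₁ M₂) (u * (m / (Nat.gcd M₁ M₂ : ℤ))) c)
        else 0 := by
  set d := Nat.gcd M₁ M₂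
  have hd : (d : ℤ) ≠ 0 := by exact_mod_cast (Nat.gcd_pos_of_pos_left M₂ hM₁).ne'
  have hM₁d : (M₁ : ℤ) = d * (M₁ / d : ℕ) := by
    rw [← Nat.cast_mul, Nat.mul_div_cancel' (Nat.gcd_dvd_left M₁ M₂)]
  have hM₂d : (M₂ : ℤ) = d * (M₂ / d : ℕ) := by
    rw [← Nat.cast_mul, Nat.mul_div_cancel' (Nat.gcd_dvd_right M₁ M₂)]
  funext n
  by_cases hn : M₁ ∣ n
  · obtain ⟨k, rfl⟩ := hn
    have hcong := Int.mul_mul_modEq_iff_dvd_and_modEq (k := k) (m := m) hd hu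
    rw [← hM₁d, ← hM₂d] at hcong
    simp only [sieve, Vop_mul_apply hM₁, Nat.cast_mul, hcong]
    by_cases hdm : (d : ℤ) ∣ m <;> simp [hdm, sieve, Vop_mul_apply hM₁]
  · simp only [sieve, Vop_apply_of_not_dvd hn, ite_self]
    split_ifs <;> simp [Vop_apply_of_not_dvd hn]

theorem V_sieve_commute (M₁ M₂ : ℕ) (hM₁ : 0 < M₁) (hM₂ : 0 < M₂) (m : ℤ)
    (u : ℤ) (hu : ((M₁ / Nat.gcd M₁ M₂ : ℕ) : ℤ) * u ≡ 1 [ZMOD (M₂ / Nat.gcd M₁ M₂ : ℕ)])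
    (c : ℕ → ℂ) :
    sieve M₂ m (Vop M₁ c)
      = if ((Nat.gcd M₁ M₂ : ℤ)) ∣ m then
          Vop M₁ (sieve (M₂ / Nat.gcd M₁ M₂) (u * (m / (Nat.gcd M₁ M₂ : ℤ))) c)
        else 0 :=
  V_sieve_commute_general M₁ M₂ hM₁ m u hu c
end

section
/- Let n be a positive integer divisible by 80, and write n = 2^a·5^b·c with gcd(10,c) = 1 (so a ≥ 4, b ≥ 1). Then σ(n/16) − σ(n/32) − σ(n/80) + σ(n/160) + 8σ(n/256) − 32σ(n/512) − 8σ(n/1280) + 32σ(n/2560) = 5^b·σ(c)·2^{a−4} if 4 ≤ a ≤ 7, and = 5^b·σ(c)·24 if a ≥ 8, where σ(x) denotes the sum of divisors of x when x is a positive integer and σ(x) := 0 when x is not an integer. -/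
/-- The sum-of-divisors function. -/
def sigma1 (n : ℕ) : ℕ := ∑ d ∈ n.divisors, d

/-- `σ(n/k)`, extended by `0` when `k` does not divide `n`. -/
def sigmaDiv (n k : ℕ) : ℤ := if k ∣ n then (sigma1 (n / k) : ℤ) else 0

/-!
Every modulus `16, 32, …, 2560` is `2^i 5^j`, so by multiplicativity each term `σ(n / 2^i 5^j)`
splits into a `2`-part, a `5`-part and `σ(c)`. The combination factors as
`σ(c) (σ(5^b) - σ(5^(b-1))) (σ(2^(a-4)) - σ(2^(a-5)) + 8 σ(2^(a-8)) - 32 σ(2^(a-9)))`;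
the middle factor is `5^b`, and the geometric sum `σ(2^k) = 2^(k+1) - 1` evaluates the last one
to `2^(a-4)` for `a ≤ 7` and to `24` for `a ≥ 8`.
-/

lemma sigma1_mul {m n : ℕ} (h : m.Coprime n) : sigma1 (m * n) = sigma1 m * sigma1 n :=
  h.sum_divisors_mul

lemma sigmaDiv_one (n : ℕ) : sigmaDiv n 1 = sigma1 n := by
  simp [sigmaDiv]

lemma sigmaDiv_mul_mul {m n k l : ℕ} (hmn : m.Coprime n) (hkn : k.Coprime n)
    (hlm : l.Coprime m) : sigmaDiv (m * n) (k * l) = sigmaDiv m k * sigmaDiv n l := by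
  have hdvd : k * l ∣ m * n ↔ k ∣ m ∧ l ∣ n :=
    ⟨fun h => ⟨hkn.dvd_of_dvd_mul_right ((dvd_mul_right k l).trans h),
      hlm.dvd_of_dvd_mul_left ((dvd_mul_left l k).trans h)⟩,
     fun h => mul_dvd_mul h.1 h.2⟩
  simp only [sigmaDiv, hdvd, ite_and]
  split_ifs with hk hl
  · have hcop : (m / k).Coprime (n / l) :=
      (hmn.coprime_div_left hk).coprime_div_right hl
    rw [← Nat.div_mul_div_comm hk hl, sigma1_mul hcop]
    push_cast
    rfl
  all_goals simp

lemma sigmaDiv_pow_of_lt {p a i : ℕ} (hp : 1 < p) (h : a < i) : sigmaDiv (p ^ a) (p ^ i) = 0 := by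
  rw [sigmaDiv, if_neg]
  rw [Nat.pow_dvd_pow_iff_le_right hp]
  omega

lemma sigma1_prime_pow_mul_sub_one {p : ℕ} (hp : p.Prime) (k : ℕ) :
    (sigma1 (p ^ k) : ℤ) * (p - 1) = p ^ (k + 1) - 1 := by
  rw [sigma1, Nat.sum_divisors_prime_pow hp]
  push_cast
  exact geom_sum_mul _ _

lemma sigmaDiv_prime_pow_mul_sub_one {p a i : ℕ} (hp : p.Prime) (h : i ≤ a + 1) :
    sigmaDiv (p ^ a) (p ^ i) * (p - 1) = p ^ (a + 1 - i) - 1 := by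
  rcases h.lt_or_eq with h | rfl
  · rw [sigmaDiv, if_pos (pow_dvd_pow p (by omega)), Nat.pow_div (by omega) hp.pos,
      sigma1_prime_pow_mul_sub_one hp, show a - i + 1 = a + 1 - i by omega]
  · simp [sigmaDiv_pow_of_lt hp.one_lt (Nat.lt_succ_self a)]

lemma sigmaDiv_prime_pow_sub_succ {p a i : ℕ} (hp : p.Prime) (h : i ≤ a) :
    sigmaDiv (p ^ a) (p ^ i) - sigmaDiv (p ^ a) (p ^ (i + 1)) = p ^ (a - i) := by
  have hp1 : (p : ℤ) - 1 ≠ 0 := sub_ne_zero.mpr (by exact_mod_cast hp.one_lt.ne')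
  apply mul_right_cancel₀ hp1
  rw [sub_mul, sigmaDiv_prime_pow_mul_sub_one hp (by omega),
    sigmaDiv_prime_pow_mul_sub_one hp (by omega), show a + 1 - i = a - i + 1 by omega,
    show a + 1 - (i + 1) = a - i by omega]
  ring

lemma sigmaDiv_two_pow_five_pow_mul {c : ℕ} (hc : Nat.gcd 10 c = 1) (a b i j : ℕ) :
    sigmaDiv (2 ^ a * 5 ^ b * c) (2 ^ i * 5 ^ j)
      = sigmaDiv (2 ^ a) (2 ^ i) * sigmaDiv (5 ^ b) (5 ^ j) * sigma1 c := by
  have h2c : Nat.Coprime 2 c := Nat.Coprime.coprime_dvd_left (by norm_num) hc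
  have h5c : Nat.Coprime 5 c := Nat.Coprime.coprime_dvd_left (by norm_num) hc
  have h25 : ∀ x y : ℕ, Nat.Coprime (2 ^ x) (5 ^ y) := fun x y => Nat.Coprime.pow x y (by norm_num)
  have h10c : ∀ x y : ℕ, Nat.Coprime (2 ^ x * 5 ^ y) c := fun x y =>
    Nat.Coprime.mul_left (h2c.pow_left x) (h5c.pow_left y)
  rw [← mul_one (2 ^ i * 5 ^ j), sigmaDiv_mul_mul (h10c a b) (h10c i j) (Nat.coprime_one_left _),
    sigmaDiv_mul_mul (h25 a b) (h25 i b) (h25 a j).symm, sigmaDiv_one]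

lemma sigmaDiv_two_pow_combination {a : ℕ} (ha : 4 ≤ a) :
    sigmaDiv (2 ^ a) (2 ^ 4) - sigmaDiv (2 ^ a) (2 ^ 5)
        + 8 * sigmaDiv (2 ^ a) (2 ^ 8) - 32 * sigmaDiv (2 ^ a) (2 ^ 9)
      = if a ≤ 7 then 2 ^ (a - 4) else 24 := by
  rw [sigmaDiv_prime_pow_sub_succ Nat.prime_two ha]
  split_ifs with h7
  · rw [sigmaDiv_pow_of_lt one_lt_two (by omega), sigmaDiv_pow_of_lt one_lt_two (by omega)]
    push_cast
    ring
  · obtain ⟨k, rfl⟩ : ∃ k, a = k + 8 := ⟨a - 8, by omega⟩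
    have h8 := sigmaDiv_prime_pow_mul_sub_one (a := k + 8) (i := 8) Nat.prime_two (by omega)
    have h9 := sigmaDiv_prime_pow_mul_sub_one (a := k + 8) (i := 9) Nat.prime_two (by omega)
    rw [show k + 8 + 1 - 8 = k + 1 by omega] at h8
    rw [show k + 8 + 1 - 9 = k by omega] at h9
    rw [show k + 8 - 4 = k + 4 by omega]
    push_cast at h8 h9 ⊢
    linear_combination 8 * h8 - 32 * h9

theorem eisenstein_coeff_m12_general (n : ℕ)
    (a b c : ℕ) (hc : Nat.gcd 10 c = 1) (hdec : n = 2 ^ a * 5 ^ b * c) :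
    (4 ≤ a ∧ a ≤ 7 →
      sigmaDiv n 16 - sigmaDiv n 32 - sigmaDiv n 80 + sigmaDiv n 160 + 8 * sigmaDiv n 256
          - 32 * sigmaDiv n 512 - 8 * sigmaDiv n 1280 + 32 * sigmaDiv n 2560
        = 5 ^ b * (sigma1 c : ℤ) * 2 ^ (a - 4)) ∧
    (8 ≤ a →
      sigmaDiv n 16 - sigmaDiv n 32 - sigmaDiv n 80 + sigmaDiv n 160 + 8 * sigmaDiv n 256
          - 32 * sigmaDiv n 512 - 8 * sigmaDiv n 1280 + 32 * sigmaDiv n 2560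
        = 5 ^ b * (sigma1 c : ℤ) * 24) := by
  have h5 : sigmaDiv (5 ^ b) (5 ^ 0) - sigmaDiv (5 ^ b) (5 ^ 1) = 5 ^ b := by
    simpa using sigmaDiv_prime_pow_sub_succ Nat.prime_five (Nat.zero_le b)
  have hfactor :
      sigmaDiv n 16 - sigmaDiv n 32 - sigmaDiv n 80 + sigmaDiv n 160 + 8 * sigmaDiv n 256
          - 32 * sigmaDiv n 512 - 8 * sigmaDiv n 1280 + 32 * sigmaDiv n 2560
        = 5 ^ b * sigma1 c * (sigmaDiv (2 ^ a) (2 ^ 4) - sigmaDiv (2 ^ a) (2 ^ 5)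
            + 8 * sigmaDiv (2 ^ a) (2 ^ 8) - 32 * sigmaDiv (2 ^ a) (2 ^ 9)) := by
    rw [hdec, show 16 = 2 ^ 4 * 5 ^ 0 by rfl, show 32 = 2 ^ 5 * 5 ^ 0 by rfl,
      show 80 = 2 ^ 4 * 5 ^ 1 by rfl, show 160 = 2 ^ 5 * 5 ^ 1 by rfl,
      show 256 = 2 ^ 8 * 5 ^ 0 by rfl, show 512 = 2 ^ 9 * 5 ^ 0 by rfl,
      show 1280 = 2 ^ 8 * 5 ^ 1 by rfl, show 2560 = 2 ^ 9 * 5 ^ 1 by rfl]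
    simp only [sigmaDiv_two_pow_five_pow_mul hc, ← h5]
    ring
  refine ⟨fun ha => ?_, fun ha => ?_⟩
  · rw [hfactor, sigmaDiv_two_pow_combination ha.1, if_pos ha.2]
  · rw [hfactor, sigmaDiv_two_pow_combination (by omega), if_neg (by omega)]

theorem eisenstein_coeff_m12 (n : ℕ) (hn : 0 < n) (h80 : 80 ∣ n)
    (a b c : ℕ) (hc : Nat.gcd 10 c = 1) (hdec : n = 2 ^ a * 5 ^ b * c) :
    (4 ≤ a ∧ a ≤ 7 →
      sigmaDiv n 16 - sigmaDiv n 32 - sigmaDiv n 80 + sigmaDiv n 160 + 8 * sigmaDiv n 256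
          - 32 * sigmaDiv n 512 - 8 * sigmaDiv n 1280 + 32 * sigmaDiv n 2560
        = 5 ^ b * (sigma1 c : ℤ) * 2 ^ (a - 4)) ∧
    (8 ≤ a →
      sigmaDiv n 16 - sigmaDiv n 32 - sigmaDiv n 80 + sigmaDiv n 160 + 8 * sigmaDiv n 256
          - 32 * sigmaDiv n 512 - 8 * sigmaDiv n 1280 + 32 * sigmaDiv n 2560
        = 5 ^ b * (sigma1 c : ℤ) * 24) :=
  eisenstein_coeff_m12_general n a b c hc hdec
end

section
/- Let h ∈ ℤ, k a positive integer with gcd(h,k) = 1, ℓ ≥ 0, r ∈ ℤ, M a positive integer with gcd(M,r) ∈ {1,2,4}. Write M = 2^μ M₀, r = 2^ϱ r₀, k = 2^κ k₀ with M₀, r₀, k₀ odd, and set g₀ := gcd(M₀,k₀), g₁ := gcd(g₀, k₀/g₀). If g₁ ≠ 1 or ϱ < min(μ, κ − ℓ − μ) − 1, then the Gauss sum G(2^ℓ h M², 2^{ℓ+1} h r M; k) vanishes. -/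
/-!
If `q ∣ c`, `q ∣ a` and `q ∤ b`, the translation `j ↦ j + c / q` permutes the residues mod `c`
and multiplies every term of `G(a, b; c)` by the root of unity `e(b / q) ≠ 1`, so the sum
vanishes. When `g₁ ≠ 1`, a prime `p ∣ g₁` is odd, divides `M` exactly `α ≥ 1` times and `k` at
least `α + 1` times, and `p ∤ 2hr`; take `q = p ^ (α + 1)`. In the other case take
`q = 2 ^ (ℓ + μ + ϱ + 2)`.
-/

open Complex

open Finset

theorem Finset.sum_range_eq_sum_zmod {M : Type*} [AddCommMonoid M] (c : ℕ) [NeZero c]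
    (f : ZMod c → M) : ∑ j ∈ range c, f j = ∑ x : ZMod c, f x := by
  obtain ⟨n, rfl⟩ : ∃ n, c = n + 1 := Nat.exists_eq_succ_of_ne_zero (NeZero.ne c)
  rw [← Fin.sum_univ_eq_sum_range]
  exact Fintype.sum_congr _ _ fun x => congrArg f (Fin.cast_val_eq_self x)

theorem Fintype.sum_eq_zero_of_add_eq_mul {G R : Type*} [AddGroup G] [Fintype G] [Ring R]
    [NoZeroDivisors R] {f : G → R} {s : G} {z : R} (hz : z ≠ 1)
    (hf : ∀ x, f (x + s) = z * f x) : ∑ x, f x = 0 := by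
  have hinv : ∑ x, f x = z * ∑ x, f x := by
    rw [mul_sum, ← Equiv.sum_comp (Equiv.addRight s)]
    exact Fintype.sum_congr _ _ hf
  have : (z - 1) * ∑ x, f x = 0 := by rw [sub_mul, ← hinv, one_mul, sub_self]
  exact (mul_eq_zero.mp this).resolve_left (sub_ne_zero.mpr hz)

theorem gaussSum'_eq_sum_stdAddChar (a b : ℤ) (c : ℕ) [NeZero c] :
    gaussSum' a b c =
      ∑ x : ZMod c, ZMod.stdAddChar ((a : ZMod c) * x ^ 2 + (b : ZMod c) * x) := by
  rw [gaussSum', ← sum_range_eq_sum_zmod]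
  refine sum_congr rfl fun j _ => ?_
  have := ZMod.stdAddChar_coe (N := c) (a * j ^ 2 + b * j)
  push_cast at this
  rw [this]

theorem gaussSum'_eq_zero_of_dvd {a b : ℤ} {c q : ℕ} (hqc : q ∣ c) (hqa : (q : ℤ) ∣ a)
    (hqb : ¬ (q : ℤ) ∣ b) : gaussSum' a b c = 0 := by
  rcases eq_or_ne c 0 with rfl | hc
  · simp [gaussSum']
  have : NeZero c := ⟨hc⟩
  obtain ⟨s, rfl⟩ := hqc
  have hs : (s : ℤ) ≠ 0 := by exact_mod_cast right_ne_zero_of_mul hc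
  have has : (a : ZMod (q * s)) * s = 0 := by
    rw [← Int.cast_natCast, ← Int.cast_mul, ZMod.intCast_zmod_eq_zero_iff_dvd]; push_cast
    exact mul_dvd_mul_right hqa _
  have hbs : (b : ZMod (q * s)) * s ≠ 0 := by
    rw [Ne, ← Int.cast_natCast, ← Int.cast_mul, ZMod.intCast_zmod_eq_zero_iff_dvd]; push_cast
    rwa [mul_dvd_mul_iff_right hs]
  rw [gaussSum'_eq_sum_stdAddChar]
  refine Fintype.sum_eq_zero_of_add_eq_mul (s := (s : ZMod (q * s)))
    (z := ZMod.stdAddChar ((b : ZMod (q * s)) * (s : ZMod (q * s)))) ?_ fun x => ?_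
  · rwa [Ne, ← (ZMod.stdAddChar (N := q * s)).map_zero_eq_one,
      ZMod.injective_stdAddChar.eq_iff]
  · rw [← AddChar.map_add_eq_mul]
    congr 1
    linear_combination (2 * x + s) * has

theorem gaussSum'_pow_mul_eq_zero {p e c : ℕ} {a u : ℤ} (hc : p ^ (e + 1) ∣ c)
    (ha : (p : ℤ) ^ (e + 1) ∣ a) (hu : ¬ (p : ℤ) ∣ u) : gaussSum' a (p ^ e * u) c = 0 := by
  rcases eq_or_ne p 0 with rfl | hp
  · simp_all [gaussSum']
  refine gaussSum'_eq_zero_of_dvd hc (by exact_mod_cast ha) ?_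
  rwa [Nat.cast_pow, pow_succ, mul_dvd_mul_iff_left (pow_ne_zero _ (by exact_mod_cast hp))]

theorem Nat.exists_prime_dvd_and_pow_factorization_succ_dvd {m n : ℕ} (hm : m ≠ 0)
    (hn : n ≠ 0) (h : (m.gcd n).gcd (n / m.gcd n) ≠ 1) :
    ∃ p, p.Prime ∧ p ∣ m ∧ p ^ (m.factorization p + 1) ∣ n := by
  set p := ((m.gcd n).gcd (n / m.gcd n)).minFac
  have hp : p.Prime := Nat.minFac_prime h
  have hpg : p ∣ (m.gcd n).gcd (n / m.gcd n) := Nat.minFac_dvd _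
  refine ⟨p, hp, (hpg.trans (gcd_dvd_left _ _)).trans (gcd_dvd_left _ _), ?_⟩
  have hquot : n / m.gcd n ≠ 0 :=
    (Nat.div_pos (Nat.gcd_le_right _ (Nat.pos_of_ne_zero hn)) (Nat.gcd_pos_of_pos_right _
      (Nat.pos_of_ne_zero hn))).ne'
  have hpos := hp.factorization_pos_of_dvd hquot (hpg.trans (gcd_dvd_right _ _))
  rw [Nat.factorization_div (gcd_dvd_right m n), Nat.factorization_gcd hm hn] at hpos
  simp only [Finsupp.tsub_apply, Finsupp.inf_apply] at hpos
  rw [hp.pow_dvd_iff_le_factorization hn]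
  omega

theorem gaussSum'_theta_eq_zero_of_prime {h r : ℤ} {k ℓ M p : ℕ} (hp : p.Prime)
    (hp2 : p ≠ 2) (hhk : IsCoprime h k) (hMr : Int.gcd M r ∣ 4) (hM : M ≠ 0) (hpM : p ∣ M)
    (hpk : p ^ (M.factorization p + 1) ∣ k) :
    gaussSum' (2 ^ ℓ * h * M ^ 2) (2 ^ (ℓ + 1) * h * r * M) k = 0 := by
  set α := M.factorization p
  have hpZ : Prime (p : ℤ) := Nat.prime_iff_prime_int.mp hp
  have hp2pow : ∀ n, ¬ (p : ℤ) ∣ 2 ^ n := fun n h2 =>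
    hp2 <| (Nat.prime_dvd_prime_iff_eq hp Nat.prime_two).mp <|
      hp.dvd_of_dvd_pow (by exact_mod_cast h2)
  have hph : ¬ (p : ℤ) ∣ h := fun hph =>
    hpZ.not_isUnit <| hhk.isUnit_of_dvd' hph <| by
      exact_mod_cast (dvd_pow_self p (Nat.succ_ne_zero _)).trans hpk
  have hpr : ¬ (p : ℤ) ∣ r := fun hpr =>
    hp2pow 2 <| (Int.dvd_coe_gcd (Int.natCast_dvd_natCast.mpr hpM) hpr).trans <| by
      exact_mod_cast hMr
  obtain ⟨u, hu, hpu⟩ : ∃ u, p ^ α * u = M ∧ ¬ p ∣ u :=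
    ⟨_, Nat.ordProj_mul_ordCompl_eq_self M p, Nat.not_dvd_ordCompl hp hM⟩
  have hb : 2 ^ (ℓ + 1) * h * r * M = (p : ℤ) ^ α * (2 ^ (ℓ + 1) * h * r * u) := by
    rw [← hu]; push_cast; ring
  rw [hb]
  refine gaussSum'_pow_mul_eq_zero hpk ?_ ?_
  · have hα : (p : ℤ) ^ (α + 1) ∣ ((p : ℤ) ^ α) ^ 2 := by
      rw [← pow_mul]; exact pow_dvd_pow _ (by linarith [hp.factorization_pos_of_dvd hM hpM])
    exact (hα.trans (pow_dvd_pow_of_dvd (by exact_mod_cast Dvd.intro u hu) 2)).mul_left _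
  · exact hpZ.not_dvd_mul (hpZ.not_dvd_mul (hpZ.not_dvd_mul (hp2pow _) hph) hpr)
      (by exact_mod_cast hpu)

theorem gaussSum'_theta_eq_zero_of_two_adic {h r r₀ : ℤ} {k ℓ M M₀ μ ϱ : ℕ}
    (hM : M = 2 ^ μ * M₀) (hr : r = 2 ^ ϱ * r₀) (hh : Odd h) (hr₀ : Odd r₀) (hM₀ : Odd M₀)
    (hμ : ϱ + 2 ≤ μ) (hk : 2 ^ (ℓ + μ + ϱ + 2) ∣ k) :
    gaussSum' (2 ^ ℓ * h * M ^ 2) (2 ^ (ℓ + 1) * h * r * M) k = 0 := by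
  have hb : 2 ^ (ℓ + 1) * h * r * M = ((2 : ℕ) : ℤ) ^ (ℓ + μ + ϱ + 1) * (h * r₀ * M₀) := by
    rw [hM, hr]; push_cast; ring
  rw [hb]
  refine gaussSum'_pow_mul_eq_zero hk ?_ ?_
  · refine (pow_dvd_pow _ (by omega : ℓ + μ + ϱ + 1 + 1 ≤ ℓ + 2 * μ)).trans
      (Dvd.intro (h * M₀ ^ 2) ?_)
    rw [hM]; push_cast; ring
  · rw [Nat.cast_ofNat, ← even_iff_two_dvd, Int.not_even_iff_odd]
    exact (hh.mul hr₀).mul hM₀.natCast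

theorem gaussSum_theta_vanishing_general (h : ℤ) (k : ℕ) (hhk : Int.gcd h k = 1)
    (ℓ : ℕ) (r : ℤ) (M : ℕ) (hMr : Int.gcd (M : ℤ) r ∈ ({1, 2, 4} : Set ℕ))
    (μ ϱ κ : ℕ) (M₀ k₀ : ℕ) (r₀ : ℤ)
    (hMdec : M = 2 ^ μ * M₀) (hrdec : r = 2 ^ ϱ * r₀) (hkdec : k = 2 ^ κ * k₀)
    (hM₀ : Odd M₀) (hr₀ : Odd r₀) (hk₀ : Odd k₀)
    (hvanish : Nat.gcd (Nat.gcd M₀ k₀) (k₀ / Nat.gcd M₀ k₀) ≠ 1 ∨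
      (ϱ : ℤ) < min (μ : ℤ) ((κ : ℤ) - ℓ - μ) - 1) :
    gaussSum' (2 ^ ℓ * h * M ^ 2) (2 ^ (ℓ + 1) * h * r * M) k = 0 := by
  have hhk' : IsCoprime h k := Int.isCoprime_iff_gcd_eq_one.mpr hhk
  have hk₀k : k₀ ∣ k := Dvd.intro_left _ hkdec.symm
  have hM₀0 : M₀ ≠ 0 := hM₀.pos.ne'
  rcases hvanish with hg | hϱ
  · obtain ⟨p, hp, hpM₀, hpk₀⟩ :=
      Nat.exists_prime_dvd_and_pow_factorization_succ_dvd hM₀0 hk₀.pos.ne' hg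
    have hp2 : p ≠ 2 := by
      rintro rfl
      exact hk₀.not_two_dvd_nat ((dvd_pow_self 2 (Nat.succ_ne_zero _)).trans hpk₀)
    have hvp : M.factorization p = M₀.factorization p := by
      rw [hMdec]
      exact Nat.factorization_eq_of_coprime_right ((Nat.coprime_two_left.mpr hM₀).pow_left μ)
        ((Nat.mem_primeFactorsList hM₀0).mpr ⟨hp, hpM₀⟩)
    have hMr4 : Int.gcd M r ∣ 4 := by obtain he | he | he := hMr <;> rw [he] <;> norm_num
    exact gaussSum'_theta_eq_zero_of_prime hp hp2 hhk' hMr4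
      (hMdec ▸ mul_ne_zero (pow_ne_zero _ two_ne_zero) hM₀0)
      (hpM₀.trans (Dvd.intro_left _ hMdec.symm)) (hvp ▸ hpk₀.trans hk₀k)
  · obtain ⟨hμ, hκ⟩ : ϱ + 2 ≤ μ ∧ ℓ + μ + ϱ + 2 ≤ κ := by omega
    have h2k : (2 : ℤ) ∣ k := by
      rw [hkdec]; push_cast; exact (dvd_pow_self 2 (by omega)).mul_right _
    have hh : Odd h := Int.not_even_iff_odd.mp fun he =>
      Int.prime_two.not_isUnit (hhk'.isUnit_of_dvd' (even_iff_two_dvd.mp he) h2k)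
    exact gaussSum'_theta_eq_zero_of_two_adic hMdec hrdec hh hr₀ hM₀ hμ
      ((pow_dvd_pow 2 hκ).trans (Dvd.intro _ hkdec.symm))

theorem gaussSum_theta_vanishing (h : ℤ) (k : ℕ) (hk : 0 < k) (hhk : Int.gcd h k = 1)
    (ℓ : ℕ) (r : ℤ) (M : ℕ) (hM : 0 < M) (hMr : Int.gcd (M : ℤ) r ∈ ({1, 2, 4} : Set ℕ))
    (μ ϱ κ : ℕ) (M₀ k₀ : ℕ) (r₀ : ℤ)
    (hMdec : M = 2 ^ μ * M₀) (hrdec : r = 2 ^ ϱ * r₀) (hkdec : k = 2 ^ κ * k₀)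
    (hM₀ : Odd M₀) (hr₀ : Odd r₀) (hk₀ : Odd k₀)
    (hvanish : Nat.gcd (Nat.gcd M₀ k₀) (k₀ / Nat.gcd M₀ k₀) ≠ 1 ∨
      (ϱ : ℤ) < min (μ : ℤ) ((κ : ℤ) - ℓ - μ) - 1) :
    gaussSum' (2 ^ ℓ * h * M ^ 2) (2 ^ (ℓ + 1) * h * r * M) k = 0 :=
  gaussSum_theta_vanishing_general h k hhk ℓ r M hMr μ ϱ κ M₀ k₀ r₀ hMdec hrdec hkdec hM₀ hr₀ hk₀
    hvanish
end
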